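/- For every integer n ≥ 0, the function h_n(x) = n·x^n/(1+x) + x^n/(1+x)² satisfies h_n^{(n)}(x) = (n+1)!/(1+x)^{n+2} for all x > 0, h_n^{(k)}(0) = 0 for every integer k with 0 ≤ k ≤ n−1, and h_n^{(k)}(x) > 0 for every integer k with 0 ≤ k ≤ n and every x > 0. -/

import Mathlib

/-- `h_n(x) = n·xⁿ/(1+x) + xⁿ/(1+x)²`. -/
noncomputable def h (n : ℕ) (x : ℝ) : ℝ :=
  n * x ^ n / (1 + x) + x ^ n / (1 + x) ^ 2

/-! `h n` is the derivative of `x^(n+1)/(1+x)`, and dividing by `1 + x` gives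
`x^(n+1)/(1+x) = Q(x) + (-1)^(n+1)/(1+x)` with `Q` a polynomial of degree `n`. Hence on `x > -1`
`h_n^(k)(x) = Q^(k+1)(x) + (-1)^(n+k) (k+1)!/(1+x)^(k+2)`: for `k = n` the polynomial part is gone,
and for `k < n` the two terms cancel at `0` since `Q` has coefficients `(-1)^(n-j)`. Positivity
then propagates down from `k = n`: a function vanishing at `0` whose derivative is positive on
`(0, ∞)` is positive there. -/

open Polynomial Set Filter
open scoped Nat Topology

theorem Polynomial.iterate_derivative_eval_zero {R : Type*} [Semiring R] (p : R[X]) (m : ℕ) :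
    (derivative^[m] p).eval 0 = m ! * p.coeff m := by
  rw [← coeff_zero_eq_eval_zero, coeff_iterate_derivative, zero_add, Nat.descFactorial_self,
    nsmul_eq_mul]

theorem pos_of_deriv_pos_of_map_zero {g : ℝ → ℝ} (hg : DifferentiableOn ℝ g (Ici 0))
    (h0 : g 0 = 0) (hpos : ∀ x, 0 < x → 0 < deriv g x) {x : ℝ} (hx : 0 < x) : 0 < g x := by
  have hmono : StrictMonoOn g (Ici 0) :=
    strictMonoOn_of_deriv_pos (convex_Ici 0) hg.continuousOn
      (by rw [interior_Ici]; exact hpos)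
  simpa [h0] using hmono (mem_Ici.mpr le_rfl) hx.le hx

theorem iteratedDeriv_pos_of_vanishing_at_zero {f : ℝ → ℝ} {n : ℕ}
    (hdiff : ∀ k < n, DifferentiableOn ℝ (iteratedDeriv k f) (Ici 0))
    (hzero : ∀ k < n, iteratedDeriv k f 0 = 0)
    (hpos : ∀ x, 0 < x → 0 < iteratedDeriv n f x) {k : ℕ} (hk : k ≤ n) :
    ∀ x, 0 < x → 0 < iteratedDeriv k f x := by
  induction hk using Nat.decreasingInduction with
  | self => exact hpos
  | of_succ k hk ih =>
    refine fun x hx => pos_of_deriv_pos_of_map_zero (hdiff k hk) (hzero k hk) (fun y hy => ?_) hx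
    rw [← iteratedDeriv_succ]
    exact ih y hy

noncomputable def altGeomPoly (n : ℕ) : ℝ[X] :=
  ∑ j ∈ Finset.range (n + 1), C ((-1) ^ (n - j)) * X ^ j

lemma altGeomPoly_eval_mul (n : ℕ) (x : ℝ) :
    (altGeomPoly n).eval x * (x + 1) = x ^ (n + 1) - (-1) ^ (n + 1) := by
  simpa [altGeomPoly, eval_finsetSum, mul_comm] using geom_sum₂_mul x (-1) (n + 1)

lemma altGeomPoly_coeff {n m : ℕ} (hm : m ≤ n) : (altGeomPoly n).coeff m = (-1) ^ (n - m) := by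
  simp only [altGeomPoly, finsetSum_coeff, coeff_C_mul_X_pow, Finset.sum_ite_eq]
  exact if_pos (Finset.mem_range.mpr (Nat.lt_succ_of_le hm))

lemma altGeomPoly_natDegree_le (n : ℕ) : (altGeomPoly n).natDegree ≤ n :=
  natDegree_sum_le_of_forall_le _ _ fun _ hj =>
    (natDegree_C_mul_X_pow_le _ _).trans (Nat.lt_succ_iff.mp (Finset.mem_range.mp hj))

-- The `m`-th derivative of `x^(n+1)/(1+x)` on `x > -1`.
noncomputable def powDivDeriv (n m : ℕ) (x : ℝ) : ℝ :=
  (derivative^[m] (altGeomPoly n)).eval x + (-1) ^ (n + m + 1) * m ! / (1 + x) ^ (m + 1)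

lemma powDivDeriv_zero (n : ℕ) {x : ℝ} (hx : 1 + x ≠ 0) :
    powDivDeriv n 0 x = x ^ (n + 1) / (1 + x) := by
  have := altGeomPoly_eval_mul n x
  rw [powDivDeriv, eq_div_iff hx]
  simp only [Function.iterate_zero, id, add_zero, Nat.factorial_zero, Nat.cast_one, mul_one,
    zero_add, pow_one]
  field_simp
  linear_combination this

lemma hasDerivAt_powDivDeriv (n m : ℕ) {x : ℝ} (hx : 1 + x ≠ 0) :
    HasDerivAt (powDivDeriv n m) (powDivDeriv n (m + 1) x) x := by
  have hpoly := (derivative^[m] (altGeomPoly n)).hasDerivAt x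
  rw [← Function.iterate_succ_apply' derivative] at hpoly
  have hpow : HasDerivAt (fun y : ℝ => (1 + y) ^ (m + 1)) ((m + 1) * (1 + x) ^ m) x := by
    simpa using ((hasDerivAt_id' x).const_add 1).fun_pow (m + 1)
  refine (hpoly.add ((hasDerivAt_const x _).div hpow (pow_ne_zero _ hx))).congr_deriv ?_
  rw [powDivDeriv, Nat.factorial_succ]
  field_simp
  push_cast
  ring

lemma hasDerivAt_pow_succ_div_one_add (n : ℕ) {x : ℝ} (hx : 1 + x ≠ 0) :
    HasDerivAt (fun y => y ^ (n + 1) / (1 + y)) (h n x) x := by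
  have hpow : HasDerivAt (fun y : ℝ => y ^ (n + 1)) ((n + 1) * x ^ n) x := by
    simpa using hasDerivAt_pow (n + 1) x
  refine (hpow.fun_div ((hasDerivAt_id' x).const_add 1) hx).congr_deriv ?_
  rw [h]
  field_simp
  ring

lemma h_eq_powDivDeriv_one (n : ℕ) {x : ℝ} (hx : -1 < x) : h n x = powDivDeriv n 1 x := by
  have hx' : 1 + x ≠ 0 := by linarith
  have heq : (fun y => y ^ (n + 1) / (1 + y)) =ᶠ[𝓝 x] powDivDeriv n 0 :=
    eventually_of_mem (isOpen_Ioi.mem_nhds hx) fun y hy =>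
      (powDivDeriv_zero n (by linarith [mem_Ioi.mp hy])).symm
  exact (hasDerivAt_pow_succ_div_one_add n hx').unique
    ((hasDerivAt_powDivDeriv n 0 hx').congr_of_eventuallyEq heq)

lemma iteratedDeriv_h_eqOn (n k : ℕ) :
    EqOn (iteratedDeriv k (h n)) (powDivDeriv n (k + 1)) (Ioi (-1)) := by
  induction k with
  | zero =>
    intro x hx
    simpa using h_eq_powDivDeriv_one n hx
  | succ k ih =>
    intro x hx
    rw [iteratedDeriv_succ]
    exact ((hasDerivAt_powDivDeriv n (k + 1) (by linarith [mem_Ioi.mp hx])).congr_of_eventuallyEq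
      (eventually_of_mem (isOpen_Ioi.mem_nhds hx) ih)).deriv

lemma differentiableOn_iteratedDeriv_h (n k : ℕ) :
    DifferentiableOn ℝ (iteratedDeriv k (h n)) (Ioi (-1)) := by
  have hform : DifferentiableOn ℝ (powDivDeriv n (k + 1)) (Ioi (-1)) := fun x hx =>
    (hasDerivAt_powDivDeriv n (k + 1) (by linarith [mem_Ioi.mp hx])).differentiableAt
      |>.differentiableWithinAt
  exact hform.congr (iteratedDeriv_h_eqOn n k)

lemma powDivDeriv_succ_self (n : ℕ) (x : ℝ) :
    powDivDeriv n (n + 1) x = (n + 1)! / (1 + x) ^ (n + 2) := by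
  rw [powDivDeriv, iterate_derivative_eq_zero (Nat.lt_succ_of_le (altGeomPoly_natDegree_le n)),
    eval_zero, zero_add, show n + (n + 1) + 1 = 2 * (n + 1) by ring, pow_mul, neg_one_sq, one_pow,
    one_mul]

lemma powDivDeriv_succ_at_zero {n k : ℕ} (hk : k < n) : powDivDeriv n (k + 1) 0 = 0 := by
  have hsign : (-1 : ℝ) ^ (n + (k + 1) + 1) = -(-1) ^ (n - (k + 1)) := by
    rw [show n + (k + 1) + 1 = n - (k + 1) + 2 * (k + 1) + 1 by omega, pow_succ, pow_add, pow_mul]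
    simp
  rw [powDivDeriv, iterate_derivative_eval_zero, altGeomPoly_coeff hk, hsign, add_zero,
    one_pow, div_one]
  ring

theorem h_derivatives (n : ℕ) :
    (∀ x : ℝ, 0 < x → iteratedDeriv n (h n) x = ((n + 1).factorial : ℝ) / (1 + x) ^ (n + 2)) ∧
    (∀ k : ℕ, k + 1 ≤ n → iteratedDeriv k (h n) 0 = 0) ∧
    (∀ k : ℕ, k ≤ n → ∀ x : ℝ, 0 < x → 0 < iteratedDeriv k (h n) x) := by
  have htop : ∀ x : ℝ, 0 < x → iteratedDeriv n (h n) x = (n + 1)! / (1 + x) ^ (n + 2) :=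
    fun x hx => by
      rw [iteratedDeriv_h_eqOn n n (mem_Ioi.mpr (by linarith)), powDivDeriv_succ_self]
  have hzero : ∀ k : ℕ, k + 1 ≤ n → iteratedDeriv k (h n) 0 = 0 := fun k hk => by
    rw [iteratedDeriv_h_eqOn n k (by norm_num), powDivDeriv_succ_at_zero hk]
  have hdiff : ∀ k, DifferentiableOn ℝ (iteratedDeriv k (h n)) (Ici 0) := fun k =>
    (differentiableOn_iteratedDeriv_h n k).mono (Ici_subset_Ioi.mpr (by norm_num))
  have hpos : ∀ x : ℝ, 0 < x → 0 < iteratedDeriv n (h n) x := fun x hx => by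
    rw [htop x hx]
    positivity
  exact ⟨htop, hzero, fun k hk =>
    iteratedDeriv_pos_of_vanishing_at_zero (fun j _ => hdiff j) hzero hpos hk⟩
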